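/- Let R₁,…,R_ℓ ∈ ℝⁿ with R₁,…,R_{ℓ−1} linearly independent and R_ℓ not in their span, and let p' > ℓ. Then ∫_{ℝ^{ℓ−1}} ‖R_ℓ + ∑_{i=1}^{ℓ−1} tⁱ R_i‖^{−(p'−1)} dt = (G(R₁,…,R_{ℓ−1}))^{(p'−ℓ−1)/2} / (G(R₁,…,R_ℓ))^{(p'−ℓ)/2} · ∫_{ℝ^{ℓ−1}} (1+‖t‖²)^{−(p'−1)/2} dt, and the last integral is finite if and only if p' > ℓ. -/

import Mathlib

open MeasureTheory

/-- The Gram determinant of vectors in a real inner product space. -/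
noncomputable def gram {H : Type*} [NormedAddCommGroup H] [InnerProductSpace ℝ H]
    {k : ℕ} (v : Fin k → H) : ℝ :=
  Matrix.det (Matrix.of fun i j : Fin k => (inner ℝ (v i) (v j) : ℝ))

/-!
Write `x = y + w` with `y` the orthogonal projection of `x` onto `K = span v`. By Pythagoras
`‖x + ∑ tᵢ vᵢ‖² = ‖w‖² + ‖y + ∑ tᵢ vᵢ‖²`, and in an orthonormal basis of `K` the map
`t ↦ y + ∑ tᵢ vᵢ` becomes an affine map `t ↦ c + L t` of `ℝᵐ` with `(det L)² = G(v)`.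
Translating by `c`, substituting `L t` and rescaling by `‖w‖` turns the integral into
`|det L|⁻¹ ‖w‖^(m - (p' - 1)) ∫ (1 + ‖t‖²)^(-(p' - 1)/2) dt`, and the column operation that
replaces `x` by `w` gives `G(v, x) = G(v) ‖w‖²`. Integrability of `(1 + ‖t‖²)^(-r/2)` reduces,
in polar coordinates, to that of `s^(m - 1 - r)` at infinity.
-/

instance Module.Finite.span_range {R M ι : Type*} [Semiring R] [AddCommMonoid M] [Module R M]
    [Finite ι] (v : ι → M) : Module.Finite R (Submodule.span R (Set.range v)) :=
  Module.Finite.span_of_finite R (Set.finite_range v)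

section Gram

open Matrix Module

variable {H : Type*} [NormedAddCommGroup H] [InnerProductSpace ℝ H]

theorem gram_eq_det_gram {k : ℕ} (v : Fin k → H) : gram v = (Matrix.gram ℝ v).det := rfl

theorem Matrix.gram_sum_smul {ι : Type*} [Fintype ι] (v : ι → H) (N : Matrix ι ι ℝ) :
    Matrix.gram ℝ (fun j => ∑ i, N i j • v i) = Nᵀ * Matrix.gram ℝ v * N := by
  ext a b
  simp only [gram_apply, sum_inner, inner_sum, real_inner_smul_left, real_inner_smul_right,
    mul_apply, transpose_apply, Finset.sum_mul]
  exact Finset.sum_congr rfl fun _ _ => Finset.sum_congr rfl fun _ _ => by ring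

theorem Matrix.det_updateCol_one {ι R : Type*} [Fintype ι] [DecidableEq ι] [CommRing R]
    (j : ι) (c : ι → R) : ((1 : Matrix ι ι R).updateCol j c).det = c j := by
  simpa [one_apply] using det_updateCol_sum (1 : Matrix ι ι R) j c

theorem gram_snoc_add_sum_smul {m : ℕ} (v : Fin m → H) (u : H) (c : Fin m → ℝ) :
    gram (Fin.snoc v (u + ∑ i, c i • v i) : Fin (m + 1) → H) =
      gram (Fin.snoc v u : Fin (m + 1) → H) := by
  set N := (1 : Matrix (Fin (m + 1)) (Fin (m + 1)) ℝ).updateCol (Fin.last m) (Fin.snoc c 1)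
  have hN : (Fin.snoc v (u + ∑ i, c i • v i) : Fin (m + 1) → H) =
      fun j => ∑ i, N i j • (Fin.snoc v u : Fin (m + 1) → H) i := by
    ext1 j
    refine Fin.lastCases ?_ (fun k => ?_) j
    · simp [N, Fin.sum_univ_castSucc, add_comm]
    · simp [N, one_apply, (Fin.castSucc_lt_last k).ne]
  rw [gram_eq_det_gram, gram_eq_det_gram, hN, Matrix.gram_sum_smul, det_mul, det_mul,
    det_transpose, det_updateCol_one]
  simp

theorem gram_snoc_of_inner_eq_zero {m : ℕ} (v : Fin m → H) (u : H)
    (hu : ∀ i, inner ℝ (v i) u = 0) :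
    gram (Fin.snoc v u : Fin (m + 1) → H) = gram v * ‖u‖ ^ 2 := by
  have hcol : ∀ a, Matrix.gram ℝ (Fin.snoc v u : Fin (m + 1) → H) a (Fin.last m) =
      if a = Fin.last m then ‖u‖ ^ 2 else 0 := by
    intro a
    refine Fin.lastCases ?_ (fun i => ?_) a
    · simp [gram_apply]
    · simp [gram_apply, hu i, (Fin.castSucc_lt_last i).ne]
  rw [gram_eq_det_gram, det_succ_column _ (Fin.last m), Finset.sum_eq_single (Fin.last m)
    (fun a _ ha => by rw [hcol a, if_neg ha]; ring) (by simp), hcol, if_pos rfl,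
    Fin.succAbove_last, Even.neg_one_pow ⟨_, rfl⟩]
  simp [gram_eq_det_gram, Matrix.gram, Matrix.submatrix, mul_comm]

theorem gram_snoc_eq_gram_mul_norm_sq {m : ℕ} {v : Fin m → H} {x y : H}
    (hy : y ∈ Submodule.span ℝ (Set.range v)) (hxy : x - y ∈ (Submodule.span ℝ (Set.range v))ᗮ) :
    gram (Fin.snoc v x : Fin (m + 1) → H) = gram v * ‖x - y‖ ^ 2 := by
  obtain ⟨c, rfl⟩ := Submodule.mem_span_range_iff_exists_fun ℝ |>.1 hy
  conv_lhs => rw [← sub_add_cancel x (∑ i, c i • v i)]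
  rw [gram_snoc_add_sum_smul]
  exact gram_snoc_of_inner_eq_zero v _ fun i =>
    Submodule.inner_right_of_mem_orthogonal (Submodule.subset_span (Set.mem_range_self i)) hxy

theorem det_gram_single_eq_det_sq {ι : Type*} [Fintype ι] [DecidableEq ι]
    (L : EuclideanSpace ℝ ι →ₗ[ℝ] EuclideanSpace ℝ ι) :
    (Matrix.gram ℝ fun i => L (EuclideanSpace.single i 1)).det = LinearMap.det L ^ 2 := by
  set b := (EuclideanSpace.basisFun ι ℝ).toBasis
  have hL : (of fun i j => (EuclideanSpace.basisFun ι ℝ).repr (L (EuclideanSpace.single j 1)) i) =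
      LinearMap.toMatrix b b L := by
    ext i j
    simp [b, LinearMap.toMatrix_apply]
  rw [gram_eq_conjTranspose_mul (EuclideanSpace.basisFun ι ℝ), hL, det_mul, det_conjTranspose,
    LinearMap.det_toMatrix, star_trivial, sq]

theorem exists_linearEquiv_norm_add_sum_smul_eq {m : ℕ} {v : Fin m → H}
    (hv : LinearIndependent ℝ v) {y : H} (hy : y ∈ Submodule.span ℝ (Set.range v)) :
    ∃ (L : EuclideanSpace ℝ (Fin m) ≃ₗ[ℝ] EuclideanSpace ℝ (Fin m)) (c : EuclideanSpace ℝ (Fin m)),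
      LinearMap.det (L : EuclideanSpace ℝ (Fin m) →ₗ[ℝ] EuclideanSpace ℝ (Fin m)) ^ 2 = gram v ∧
        ∀ t : EuclideanSpace ℝ (Fin m), ‖y + ∑ i, t i • v i‖ = ‖c + L t‖ := by
  set K := Submodule.span ℝ (Set.range v)
  let bv : Basis (Fin m) ℝ K := Basis.span hv
  let bK : OrthonormalBasis (Fin m) ℝ K :=
    (stdOrthonormalBasis ℝ K).reindex ((stdOrthonormalBasis ℝ K).toBasis.indexEquiv bv)
  let L := (WithLp.linearEquiv 2 ℝ (Fin m → ℝ)).trans (bv.equivFun.symm.trans bK.repr.toLinearEquiv)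
  have hL : ∀ t, L t = bK.repr (∑ i, t i • bv i) := fun t => by
    simp [L, Basis.equivFun_symm_apply]
  have hbv : ∀ i, (bv i : H) = v i := fun i => congrArg Subtype.val (Basis.span_apply hv i)
  refine ⟨L, bK.repr ⟨y, hy⟩, ?_, fun t => ?_⟩
  · rw [← det_gram_single_eq_det_sq, gram_eq_det_gram]
    congr 1
    ext i j
    simp [gram_apply, hL, hbv]
  · rw [hL, ← map_add, LinearIsometryEquiv.norm_map, ← Submodule.norm_coe]
    simp [hbv]

end Gram

section Integrals

open Module Set

variable {E : Type*} [NormedAddCommGroup E] [NormedSpace ℝ E] [MeasurableSpace E] [BorelSpace E]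
  [FiniteDimensional ℝ E] (μ : Measure E) [μ.IsAddHaarMeasure]

theorem integral_comp_linearEquiv (L : E ≃ₗ[ℝ] E) (g : E → ℝ) :
    ∫ x, g (L x) ∂μ = |LinearMap.det (L : E →ₗ[ℝ] E)|⁻¹ * ∫ x, g x ∂μ := by
  let e := L.toContinuousLinearEquiv.toHomeomorph.toMeasurableEquiv
  have hmap : μ.map e = ENNReal.ofReal |(LinearMap.det (L : E →ₗ[ℝ] E))⁻¹| • μ :=
    Measure.map_linearMap_addHaar_eq_smul_addHaar μ (LinearEquiv.isUnit_det' L).ne_zero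
  rw [show (fun x => g (L x)) = fun x => g (e x) from rfl, ← integral_map_equiv e g, hmap,
    integral_smul_measure, ENNReal.toReal_ofReal (abs_nonneg _), abs_inv, smul_eq_mul]

theorem integral_sq_add_norm_sq_rpow {a : ℝ} (ha : 0 < a) (e : ℝ) :
    ∫ x, (a ^ 2 + ‖x‖ ^ 2) ^ e ∂μ =
      a ^ finrank ℝ E * (a ^ 2) ^ e * ∫ x, (1 + ‖x‖ ^ 2) ^ e ∂μ := by
  have hscale := μ.integral_comp_smul_of_nonneg (fun x => (a ^ 2 + ‖x‖ ^ 2) ^ e) a (hR := ha.le)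
  have hfactor : ∀ x : E, (a ^ 2 + ‖a • x‖ ^ 2) ^ e = (a ^ 2) ^ e * (1 + ‖x‖ ^ 2) ^ e :=
    fun x => by
      rw [norm_smul, Real.norm_of_nonneg ha.le, ← Real.mul_rpow (by positivity) (by positivity)]
      ring_nf
  simp only [hfactor, integral_const_mul, smul_eq_mul] at hscale
  rw [mul_assoc, hscale, ← mul_assoc, mul_inv_cancel₀ (by positivity), one_mul]

theorem integrable_rpow_neg_one_add_norm_sq_iff [Nontrivial E] {r : ℝ} :
    Integrable (fun x : E => (1 + ‖x‖ ^ 2) ^ (-r / 2)) μ ↔ (finrank ℝ E : ℝ) < r := by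
  refine ⟨fun h => ?_, integrable_rpow_neg_one_add_norm_sq⟩
  by_contra! hr
  set d := finrank ℝ E
  have hd : 0 < d := finrank_pos
  have hradial := (integrable_fun_norm_addHaar μ (f := fun y => (1 + y ^ 2) ^ (-r / 2))).1 h
  have hinv : IntegrableOn (fun y : ℝ => y ^ (-1 : ℝ)) (Ioi 1) := by
    refine ((hradial.mono_set (Ioi_subset_Ioi zero_le_one)).const_mul (2 ^ ((d : ℝ) / 2))).mono'
      (by fun_prop) ?_
    filter_upwards [ae_restrict_mem measurableSet_Ioi] with y (hy : 1 < y)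
    have hy0 : 0 < y := one_pos.trans hy
    have hsplit :
        y ^ (-1 : ℝ) = 2 ^ ((d : ℝ) / 2) * y ^ (d - 1) * (2 * y ^ 2) ^ (-(d : ℝ) / 2) := by
      rw [Real.mul_rpow zero_le_two (by positivity), ← Real.rpow_natCast y 2,
        ← Real.rpow_mul hy0.le, ← Real.rpow_natCast y (d - 1), Nat.cast_pred hd,
        mul_mul_mul_comm, ← Real.rpow_add two_pos, ← Real.rpow_add hy0]
      ring_nf
      simp
    rw [Real.norm_of_nonneg (by positivity), hsplit, smul_eq_mul, mul_assoc]
    gcongr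
    calc (2 * y ^ 2) ^ (-(d : ℝ) / 2) ≤ (1 + y ^ 2) ^ (-(d : ℝ) / 2) :=
          Real.rpow_le_rpow_of_nonpos (by positivity) (by nlinarith)
            (div_nonpos_of_nonpos_of_nonneg (by simp) zero_le_two)
      _ ≤ (1 + y ^ 2) ^ (-r / 2) :=
          Real.rpow_le_rpow_of_exponent_le (by nlinarith) (by linarith)
  exact absurd ((integrableOn_Ioi_rpow_iff one_pos).1 hinv) (lt_irrefl _)

end Integrals

theorem integral_norm_add_sum_smul_rpow {H : Type*} [NormedAddCommGroup H]
    [InnerProductSpace ℝ H] {m : ℕ} {v : Fin m → H} (hv : LinearIndependent ℝ v)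
    {x : H} (hx : x ∉ Submodule.span ℝ (Set.range v)) (p : ℝ) :
    ∫ t : EuclideanSpace ℝ (Fin m), ‖x + ∑ i, t i • v i‖ ^ (-(p - 1)) =
      gram v ^ ((p - (m + 1) - 1) / 2) /
          gram (Fin.snoc v x : Fin (m + 1) → H) ^ ((p - (m + 1)) / 2) *
        ∫ t : EuclideanSpace ℝ (Fin m), (1 + ‖t‖ ^ 2) ^ (-(p - 1) / 2) := by
  set K := Submodule.span ℝ (Set.range v)
  obtain ⟨y, hyK, hxy⟩ : ∃ y ∈ K, x - y ∈ Kᗮ :=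
    ⟨_, K.starProjection_apply_mem x, K.sub_starProjection_mem_orthogonal x⟩
  have hw : 0 < ‖x - y‖ := norm_pos_iff.2 fun h => hx (sub_eq_zero.1 h ▸ hyK)
  obtain ⟨L, c, hdet, hnorm⟩ := exists_linearEquiv_norm_add_sum_smul_eq hv hyK
  set D := LinearMap.det (L : EuclideanSpace ℝ (Fin m) →ₗ[ℝ] EuclideanSpace ℝ (Fin m))
  have hD : 0 < |D| := abs_pos.2 L.isUnit_det'.ne_zero
  have hsq : ∀ z : ℝ, 0 ≤ z → ∀ r : ℝ, (z ^ 2) ^ r = z ^ (2 * r) := fun z hz r => by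
    rw [← Real.rpow_natCast, ← Real.rpow_mul hz, Nat.cast_ofNat]
  have hintegrand : ∀ t : EuclideanSpace ℝ (Fin m), ‖x + ∑ i, t i • v i‖ ^ (-(p - 1)) =
      (‖x - y‖ ^ 2 + ‖c + L t‖ ^ 2) ^ (-(p - 1) / 2) := fun t => by
    have hmem : y + ∑ i, t i • v i ∈ K :=
      K.add_mem hyK (K.sum_mem fun i _ => K.smul_mem _ (Submodule.subset_span ⟨i, rfl⟩))
    have hpythagoras : ‖x + ∑ i, t i • v i‖ ^ 2 = ‖x - y‖ ^ 2 + ‖y + ∑ i, t i • v i‖ ^ 2 := by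
      rw [show x + ∑ i, t i • v i = x - y + (y + ∑ i, t i • v i) by abel, norm_add_sq_real,
        K.inner_left_of_mem_orthogonal hmem hxy]
      ring
    rw [← hnorm, ← hpythagoras, hsq _ (norm_nonneg _)]
    ring_nf
  have hconst : |D|⁻¹ * (‖x - y‖ ^ m * (‖x - y‖ ^ 2) ^ (-(p - 1) / 2)) =
      (D ^ 2) ^ ((p - (m + 1) - 1) / 2) / (D ^ 2 * ‖x - y‖ ^ 2) ^ ((p - (m + 1)) / 2) := by
    rw [← sq_abs D, Real.mul_rpow (by positivity) (by positivity), hsq _ hD.le, hsq _ hD.le,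
      hsq _ hw.le, hsq _ hw.le, div_mul_eq_div_div, ← Real.rpow_sub hD, ← Real.rpow_natCast _ m,
      ← Real.rpow_add hw, div_eq_mul_inv (|D| ^ _), ← Real.rpow_neg hw.le, ← Real.rpow_neg_one]
    congr 2 <;> ring
  calc ∫ t : EuclideanSpace ℝ (Fin m), ‖x + ∑ i, t i • v i‖ ^ (-(p - 1))
      = ∫ t, (‖x - y‖ ^ 2 + ‖c + L t‖ ^ 2) ^ (-(p - 1) / 2) := by simp_rw [hintegrand]
    _ = |D|⁻¹ * ∫ s, (‖x - y‖ ^ 2 + ‖c + s‖ ^ 2) ^ (-(p - 1) / 2) :=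
        integral_comp_linearEquiv volume L fun s => (‖x - y‖ ^ 2 + ‖c + s‖ ^ 2) ^ (-(p - 1) / 2)
    _ = |D|⁻¹ * ∫ s : EuclideanSpace ℝ (Fin m), (‖x - y‖ ^ 2 + ‖s‖ ^ 2) ^ (-(p - 1) / 2) := by
        rw [integral_add_left_eq_self fun s => (‖x - y‖ ^ 2 + ‖s‖ ^ 2) ^ (-(p - 1) / 2)]
    _ = _ := by
        rw [integral_sq_add_norm_sq_rpow _ hw, finrank_euclideanSpace_fin, ← mul_assoc, hconst,
          gram_snoc_eq_gram_mul_norm_sq hyK hxy, ← hdet]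

theorem stmt19_general (n m : ℕ) (hm : 1 ≤ m) (R : Fin (m + 1) → EuclideanSpace ℝ (Fin n))
    (hind : LinearIndependent ℝ (fun i : Fin m => R i.castSucc))
    (hspan : R (Fin.last m) ∉ Submodule.span ℝ (Set.range (fun i : Fin m => R i.castSucc)))
    (p' : ℝ) :
    (∫ t : EuclideanSpace ℝ (Fin m),
        ‖R (Fin.last m) + ∑ i : Fin m, t i • R i.castSucc‖ ^ (-(p' - 1)) =
      gram (fun i : Fin m => R i.castSucc) ^ ((p' - (m + 1) - 1) / 2) /
          gram R ^ ((p' - (m + 1)) / 2) *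
        ∫ t : EuclideanSpace ℝ (Fin m), (1 + ‖t‖ ^ 2) ^ (-(p' - 1) / 2)) ∧
    ∀ q : ℝ,
      (Integrable (fun t : EuclideanSpace ℝ (Fin m) => (1 + ‖t‖ ^ 2) ^ (-(q - 1) / 2)) ↔
        (m + 1 : ℝ) < q) := by
  refine ⟨?_, fun q => ?_⟩
  · have h := integral_norm_add_sum_smul_rpow hind hspan p'
    rwa [show (Fin.snoc (fun i => R i.castSucc) (R (Fin.last m)) : Fin (m + 1) → _) = R from
      Fin.snoc_init_self R] at h
  · have : Nonempty (Fin m) := ⟨⟨0, hm⟩⟩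
    rw [integrable_rpow_neg_one_add_norm_sq_iff, finrank_euclideanSpace_fin]
    constructor <;> intro <;> linarith

/-- With `ℓ = m + 1`: if `R₁,…,R_{ℓ−1}` are linearly independent, `R_ℓ` is not in their
span, and `p' > ℓ`, then
`∫_{ℝ^{ℓ−1}} ‖R_ℓ + ∑ tⁱ Rᵢ‖^{−(p'−1)} dt
  = G(R₁,…,R_{ℓ−1})^{(p'−ℓ−1)/2} / G(R₁,…,R_ℓ)^{(p'−ℓ)/2} · ∫_{ℝ^{ℓ−1}} (1+‖t‖²)^{−(p'−1)/2} dt`,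
and the last integral is finite if and only if the exponent satisfies `p' > ℓ`. -/
theorem stmt19 (n m : ℕ) (hm : 1 ≤ m) (R : Fin (m + 1) → EuclideanSpace ℝ (Fin n))
    (hind : LinearIndependent ℝ (fun i : Fin m => R i.castSucc))
    (hspan : R (Fin.last m) ∉ Submodule.span ℝ (Set.range (fun i : Fin m => R i.castSucc)))
    (p' : ℝ) (hp' : (m + 1 : ℝ) < p') :
    (∫ t : EuclideanSpace ℝ (Fin m),
        ‖R (Fin.last m) + ∑ i : Fin m, t i • R i.castSucc‖ ^ (-(p' - 1)) =
      gram (fun i : Fin m => R i.castSucc) ^ ((p' - (m + 1) - 1) / 2) /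
          gram R ^ ((p' - (m + 1)) / 2) *
        ∫ t : EuclideanSpace ℝ (Fin m), (1 + ‖t‖ ^ 2) ^ (-(p' - 1) / 2)) ∧
    ∀ q : ℝ,
      (Integrable (fun t : EuclideanSpace ℝ (Fin m) => (1 + ‖t‖ ^ 2) ^ (-(q - 1) / 2)) ↔
        (m + 1 : ℝ) < q) :=
  stmt19_general n m hm R hind hspan p'
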